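/- arXiv:2208.05308 — 2 statements merged into one kernel-verified Lean document; each statement's English description precedes it below -/
import Mathlib

section
/- Let A be a real n×n matrix and b ∈ ℝ^n (with ℝ^n identified with ℝ × ℝ^{n-1}). A vector x solves the second-order-cone absolute value equation Ax − |x| − b = 0 if and only if Ax + x − b ∈ K^n, Ax − x − b ∈ K^n, and ⟨Ax + x − b, Ax − x − b⟩ = 0. -/
open scoped Classical RealInnerProductSpace

noncomputable section

/-- The "tail" `x₂ ∈ ℝ^{n-1}` of a vector `x = (x₁, x₂) ∈ ℝ × ℝ^{n-1}`,
modelled as `x ∈ ℝ^{n}` via `EuclideanSpace ℝ (Fin (n+1))`. -/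
def socTail {n : ℕ} (x : EuclideanSpace ℝ (Fin (n + 1))) : EuclideanSpace ℝ (Fin n) :=
  WithLp.toLp 2 (fun (i : Fin n) => x i.succ)

/-- The second-order cone `K = {(x₁, x₂) ∈ ℝ × ℝ^{n-1} : ‖x₂‖ ≤ x₁}`. -/
def soc (n : ℕ) : Set (EuclideanSpace ℝ (Fin (n + 1))) :=
  {x | ‖socTail x‖ ≤ x 0}

/-- The SOC absolute value `|x|`. -/
def socAbs {n : ℕ} (x : EuclideanSpace ℝ (Fin (n + 1))) :
    EuclideanSpace ℝ (Fin (n + 1)) :=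
  if socTail x = 0 then
    WithLp.toLp 2 (fun (i : Fin (n + 1)) => if i = 0 then |x 0| else 0)
  else
    WithLp.toLp 2 (fun (i : Fin (n + 1)) =>
      if i = 0 then (|x 0 - ‖socTail x‖| + |x 0 + ‖socTail x‖|) / 2
      else ((|x 0 + ‖socTail x‖| - |x 0 - ‖socTail x‖|) / 2) * (x i / ‖socTail x‖))

variable {n : ℕ}

lemma socTail_add (a b : EuclideanSpace ℝ (Fin (n+1))) :
    socTail (a + b) = socTail a + socTail b := by ext i; simp [socTail]
lemma socTail_sub (a b : EuclideanSpace ℝ (Fin (n+1))) :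
    socTail (a - b) = socTail a - socTail b := by ext i; simp [socTail]
lemma head_add (a b : EuclideanSpace ℝ (Fin (n+1))) : (a + b) 0 = a 0 + b 0 := rfl
lemma head_sub (a b : EuclideanSpace ℝ (Fin (n+1))) : (a - b) 0 = a 0 - b 0 := rfl

lemma inner_split (a b : EuclideanSpace ℝ (Fin (n+1))) :
    ⟪a, b⟫ = a 0 * b 0 + ⟪socTail a, socTail b⟫ := by
  simp [PiLp.inner_apply, Fin.sum_univ_succ, socTail, RCLike.inner_apply]
  ring

lemma eucl_ext_iff (a b : EuclideanSpace ℝ (Fin (n+1))) :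
    a = b ↔ a 0 = b 0 ∧ socTail a = socTail b := by
  constructor
  · rintro rfl; exact ⟨rfl, rfl⟩
  · rintro ⟨h0, ht⟩
    ext i
    refine Fin.cases h0 (fun j => ?_) i
    simpa [socTail] using congrArg (fun v => v j) ht


lemma socAbs_head_zero (x : EuclideanSpace ℝ (Fin (n+1))) (h : socTail x = 0) :
    socAbs x 0 = |x 0| := by simp [socAbs, h]

lemma socAbs_tail_zero (x : EuclideanSpace ℝ (Fin (n+1))) (h : socTail x = 0) :
    socTail (socAbs x) = 0 := by
  ext i
  rw [socAbs, if_pos h]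
  simp [socAbs, h, socTail, Fin.succ_ne_zero]

lemma socAbs_head_ne (x : EuclideanSpace ℝ (Fin (n+1))) (h : socTail x ≠ 0) :
    socAbs x 0 = (|x 0 - ‖socTail x‖| + |x 0 + ‖socTail x‖|) / 2 := by simp [socAbs, h]

lemma socAbs_tail_ne (x : EuclideanSpace ℝ (Fin (n+1))) (h : socTail x ≠ 0) :
    socTail (socAbs x) =
      (((|x 0 + ‖socTail x‖| - |x 0 - ‖socTail x‖|) / 2) / ‖socTail x‖) • socTail x := by
  ext i
  rw [socAbs, if_neg h]
  simp only [socAbs, h, if_neg, socTail, Fin.succ_ne_zero, ite_false, PiLp.smul_apply,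
    smul_eq_mul, WithLp.ofLp_toLp]
  ring


lemma mem_soc_iff (z : EuclideanSpace ℝ (Fin (n+1))) : z ∈ soc n ↔ ‖socTail z‖ ≤ z 0 :=
  Iff.rfl

lemma key_forward (x : EuclideanSpace ℝ (Fin (n+1))) :
    socAbs x + x ∈ soc n ∧ socAbs x - x ∈ soc n ∧ ⟪socAbs x + x, socAbs x - x⟫ = 0 := by
  by_cases h : socTail x = 0
  · have ht : socTail (socAbs x) = 0 := socAbs_tail_zero x h
    refine ⟨?_, ?_, ?_⟩
    · rw [mem_soc_iff, socTail_add, ht, h, add_zero, norm_zero, head_add,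
        socAbs_head_zero x h]
      linarith [neg_le_abs (x 0)]
    · rw [mem_soc_iff, socTail_sub, ht, h, sub_zero, norm_zero, head_sub,
        socAbs_head_zero x h]
      linarith [le_abs_self (x 0)]
    · rw [inner_split, socTail_add, socTail_sub, ht, h, head_add, head_sub,
        socAbs_head_zero x h]
      simp only [add_zero, sub_zero, inner_zero_left]
      nlinarith [sq_abs (x 0)]
  · have hs : 0 < ‖socTail x‖ := norm_pos_iff.mpr h
    set s : ℝ := ‖socTail x‖ with hsdef
    set c : ℝ := (|x 0 + s| - |x 0 - s|) / 2 with hc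
    set a : ℝ := (|x 0 - s| + |x 0 + s|) / 2 with ha
    have htp : socTail (socAbs x + x) = (c / s + 1) • socTail x := by
      rw [socTail_add, socAbs_tail_ne x h, add_smul, one_smul]
    have htm : socTail (socAbs x - x) = (c / s - 1) • socTail x := by
      rw [socTail_sub, socAbs_tail_ne x h, sub_smul, one_smul]
    have hx : ∀ t : ℝ, |t| * s = |t * s| := fun t => by rw [abs_mul, abs_of_pos hs]
    have hnp : ‖socTail (socAbs x + x)‖ = |c + s| := by
      rw [htp, norm_smul, Real.norm_eq_abs, ← hsdef, hx, add_mul, one_mul,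
        div_mul_cancel₀ _ hs.ne']
    have hnm : ‖socTail (socAbs x - x)‖ = |c - s| := by
      rw [htm, norm_smul, Real.norm_eq_abs, ← hsdef, hx, sub_mul, one_mul,
        div_mul_cancel₀ _ hs.ne']
    refine ⟨?_, ?_, ?_⟩
    · rw [mem_soc_iff, hnp, head_add, socAbs_head_ne x h, ← ha]
      rcases abs_cases (x 0 - s) with ⟨hA, hA'⟩ | ⟨hA, hA'⟩ <;>
        rcases abs_cases (x 0 + s) with ⟨hB, hB'⟩ | ⟨hB, hB'⟩ <;>
        rw [abs_le] <;> constructor <;> simp only [hc, ha, hA, hB] <;> linarith [hs.le]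
    · rw [mem_soc_iff, hnm, head_sub, socAbs_head_ne x h, ← ha]
      rcases abs_cases (x 0 - s) with ⟨hA, hA'⟩ | ⟨hA, hA'⟩ <;>
        rcases abs_cases (x 0 + s) with ⟨hB, hB'⟩ | ⟨hB, hB'⟩ <;>
        rw [abs_le] <;> constructor <;> simp only [hc, ha, hA, hB] <;> linarith [hs.le]
    · rw [inner_split, head_add, head_sub, socAbs_head_ne x h, ← ha, htp, htm,
        real_inner_smul_left, real_inner_smul_right, real_inner_self_eq_norm_sq, ← hsdef]
      have e1 := sq_abs (x 0 - s)
      have e2 := sq_abs (x 0 + s)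
      field_simp [ha, hc]
      simp only [ha, hc]
      linear_combination (e1 + e2) / 2

lemma key_backward (x y : EuclideanSpace ℝ (Fin (n+1)))
    (h1 : y + x ∈ soc n) (h2 : y - x ∈ soc n) (h3 : ⟪y + x, y - x⟫ = 0) :
    y = socAbs x := by
  rw [mem_soc_iff, socTail_add, head_add] at h1
  rw [mem_soc_iff, socTail_sub, head_sub] at h2
  rw [inner_split, socTail_add, socTail_sub, head_add, head_sub] at h3
  by_cases h : socTail x = 0
  · simp only [h, add_zero, sub_zero] at h1 h2 h3
    rw [real_inner_self_eq_norm_sq] at h3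
    have hy2 : ‖socTail y‖ = 0 := by
      rcases abs_cases (x 0) with ⟨hA, hA'⟩ | ⟨hA, hA'⟩ <;> nlinarith [norm_nonneg (socTail y)]
    rw [eucl_ext_iff]
    refine ⟨?_, ?_⟩
    · rw [socAbs_head_zero x h]
      rw [hy2] at h1 h2
      rcases abs_cases (x 0) with ⟨hA, hA'⟩ | ⟨hA, hA'⟩ <;> nlinarith
    · rw [socAbs_tail_zero x h, norm_eq_zero.mp hy2]
  · have hs : 0 < ‖socTail x‖ := norm_pos_iff.mpr h
    have hu1 : 0 ≤ y 0 + x 0 := le_trans (norm_nonneg _) h1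
    have hv1 : 0 ≤ y 0 - x 0 := le_trans (norm_nonneg _) h2
    rcases eq_or_lt_of_le hu1 with hu | hu
    · -- case y 0 + x 0 = 0 : then y = -x on both components
      have hty : socTail y = -socTail x := by
        have h0 : socTail y + socTail x = 0 := norm_le_zero_iff.mp (le_of_le_of_eq h1 hu.symm)
        linear_combination (norm := module) h0
      have h2' : 2 * ‖socTail x‖ ≤ y 0 - x 0 := by
        have e : socTail y - socTail x = (-2 : ℝ) • socTail x := by rw [hty]; module
        rw [e, norm_smul] at h2
        simpa using h2
      have hx0 : x 0 + ‖socTail x‖ ≤ 0 := by linarith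
      have hx0' : x 0 - ‖socTail x‖ ≤ 0 := by linarith
      rw [eucl_ext_iff]
      refine ⟨?_, ?_⟩
      · rw [socAbs_head_ne x h, abs_of_nonpos hx0', abs_of_nonpos hx0]
        linarith
      · rw [socAbs_tail_ne x h, abs_of_nonpos hx0, abs_of_nonpos hx0', hty]
        have e : (-(x 0 + ‖socTail x‖) - -(x 0 - ‖socTail x‖)) / 2 / ‖socTail x‖ = -1 := by
          field_simp
          ring
        rw [e, neg_one_smul]
    · rcases eq_or_lt_of_le hv1 with hv | hv
      · -- case y 0 - x 0 = 0 : then y = x on both components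
        have hty : socTail y = socTail x := by
          have h0 : socTail y - socTail x = 0 := norm_le_zero_iff.mp (le_of_le_of_eq h2 hv.symm)
          linear_combination (norm := module) h0
        have h1' : 2 * ‖socTail x‖ ≤ y 0 + x 0 := by
          have e : socTail y + socTail x = (2 : ℝ) • socTail x := by rw [hty]; module
          rw [e, norm_smul] at h1
          simpa using h1
        have hx0 : 0 ≤ x 0 + ‖socTail x‖ := by linarith
        have hx0' : 0 ≤ x 0 - ‖socTail x‖ := by linarith
        rw [eucl_ext_iff]
        refine ⟨?_, ?_⟩
        · rw [socAbs_head_ne x h, abs_of_nonneg hx0, abs_of_nonneg hx0']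
          linarith
        · rw [socAbs_tail_ne x h, abs_of_nonneg hx0, abs_of_nonneg hx0', hty]
          have e : (x 0 + ‖socTail x‖ - (x 0 - ‖socTail x‖)) / 2 / ‖socTail x‖ = 1 := by
            field_simp
            ring
          rw [e, one_smul]
      · -- main case : both strictly positive
        have cs : -(‖socTail y + socTail x‖ * ‖socTail y - socTail x‖) ≤
            ⟪socTail y + socTail x, socTail y - socTail x⟫ := by
          have := real_inner_le_norm (socTail y + socTail x) (-(socTail y - socTail x))
          rw [inner_neg_right, norm_neg] at this
          linarith
        have key1 : ‖socTail y + socTail x‖ * ‖socTail y - socTail x‖ =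
            (y 0 + x 0) * (y 0 - x 0) :=
          le_antisymm (mul_le_mul h1 h2 (norm_nonneg _) hu.le) (by nlinarith)
        have hnu : ‖socTail y + socTail x‖ = y 0 + x 0 := by
          nlinarith [norm_nonneg (socTail y + socTail x), norm_nonneg (socTail y - socTail x)]
        have hnv : ‖socTail y - socTail x‖ = y 0 - x 0 := by
          nlinarith [norm_nonneg (socTail y + socTail x), norm_nonneg (socTail y - socTail x)]
        have hinner : ⟪socTail y + socTail x, -(socTail y - socTail x)⟫ =
            ‖socTail y + socTail x‖ * ‖-(socTail y - socTail x)‖ := by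
          rw [inner_neg_right, norm_neg, hnu, hnv]
          linarith
        have hpar := inner_eq_norm_mul_iff_real.mp hinner
        rw [norm_neg, hnu, hnv] at hpar
        -- hpar : (y 0 - x 0) • (ty + tx) = (y 0 + x 0) • -(ty - tx)
        have h4 : ((y 0 + x 0) + (y 0 - x 0)) • socTail y =
            ((y 0 + x 0) - (y 0 - x 0)) • socTail x := by
          linear_combination (norm := module) hpar
        have h5 : (2 * (y 0 + x 0)) • socTail x =
            ((y 0 + x 0) + (y 0 - x 0)) • (socTail y + socTail x) := by
          linear_combination (norm := module) - hpar
        have hy0 : 0 < y 0 := by linarith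
        have hsy : ‖socTail x‖ = y 0 := by
          have hn := congrArg norm h5
          rw [norm_smul, norm_smul, hnu, Real.norm_eq_abs, Real.norm_eq_abs,
            abs_of_pos (by linarith : (0:ℝ) < 2 * (y 0 + x 0)),
            abs_of_pos (by linarith : (0:ℝ) < y 0 + x 0 + (y 0 - x 0))] at hn
          have h7 : (2 * (y 0 + x 0)) * ‖socTail x‖ = (2 * (y 0 + x 0)) * y 0 := by
            linear_combination hn
          exact mul_left_cancel₀ (by linarith : (2 * (y 0 + x 0)) ≠ 0) h7
        have hx0 : 0 ≤ x 0 + ‖socTail x‖ := by rw [hsy]; linarith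
        have hx0' : x 0 - ‖socTail x‖ ≤ 0 := by rw [hsy]; linarith
        rw [eucl_ext_iff]
        refine ⟨?_, ?_⟩
        · rw [socAbs_head_ne x h, abs_of_nonneg hx0, abs_of_nonpos hx0']
          linarith
        · rw [socAbs_tail_ne x h, abs_of_nonneg hx0, abs_of_nonpos hx0']
          have e : (x 0 + ‖socTail x‖ - -(x 0 - ‖socTail x‖)) / 2 / ‖socTail x‖ =
              x 0 / y 0 := by
            rw [hsy]; field_simp; ring
          rw [e]
          have h6 : ((y 0 + x 0) + (y 0 - x 0)) • ((x 0 / y 0) • socTail x) =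
              ((y 0 + x 0) + (y 0 - x 0)) • socTail y := by
            rw [h4, smul_smul]
            congr 1
            field_simp
            ring
          exact (smul_right_injective (EuclideanSpace ℝ (Fin n))
            (by linarith : ((y 0 + x 0) + (y 0 - x 0)) ≠ 0) h6).symm

/-- `x` solves the SOCAVE `Ax - |x| - b = 0` iff
`Ax + x - b ∈ K`, `Ax - x - b ∈ K` and `⟪Ax + x - b, Ax - x - b⟫ = 0`. -/
theorem socave_iff_socglcp (n : ℕ) (A : Matrix (Fin (n + 1)) (Fin (n + 1)) ℝ)
    (b x : EuclideanSpace ℝ (Fin (n + 1))) :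
    Matrix.toEuclideanLin A x - socAbs x - b = 0 ↔
      (Matrix.toEuclideanLin A x + x - b ∈ soc n ∧
        Matrix.toEuclideanLin A x - x - b ∈ soc n ∧
        ⟪Matrix.toEuclideanLin A x + x - b, Matrix.toEuclideanLin A x - x - b⟫ = 0) := by
  constructor
  · intro heq
    have hy : Matrix.toEuclideanLin A x - b = socAbs x := by
      rw [sub_right_comm] at heq
      exact sub_eq_zero.mp heq
    have e1 : Matrix.toEuclideanLin A x + x - b = socAbs x + x := by rw [← hy]; abel
    have e2 : Matrix.toEuclideanLin A x - x - b = socAbs x - x := by rw [← hy]; abel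
    rw [e1, e2]
    exact key_forward x
  · rintro ⟨c1, c2, c3⟩
    have e1 : Matrix.toEuclideanLin A x + x - b = (Matrix.toEuclideanLin A x - b) + x := by
      abel
    have e2 : Matrix.toEuclideanLin A x - x - b = (Matrix.toEuclideanLin A x - b) - x := by
      abel
    rw [e1] at c1 c3
    rw [e2] at c2 c3
    rw [sub_right_comm, sub_eq_zero]
    exact key_backward x (Matrix.toEuclideanLin A x - b) c1 c2 c3
end
end

section
/- Let A be a real n×n matrix satisfying ‖Ay‖ ≥ ‖y‖ for all y ∈ ℝ^n (equivalently, A is invertible with ‖A⁻¹‖ ≤ 1 in spectral norm), let b ∈ ℝ^n, and suppose x* satisfies Ax* − |x*| − b = 0, where |·| is the SOC absolute value. Write r(x) = Ax − |x| − b. Then for every x ∈ ℝ^n, ⟨A(x − x*), r(x)⟩ ≥ (1/2)·‖r(x)‖². -/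
open scoped Classical RealInnerProductSpace

noncomputable section

namespace SocAux

variable {n : ℕ}

def tl (x : EuclideanSpace ℝ (Fin (n + 1))) : ℝ := ‖socTail x‖
def av (x : EuclideanSpace ℝ (Fin (n + 1))) : ℝ := (|x 0 - tl x| + |x 0 + tl x|) / 2
def sv (x : EuclideanSpace ℝ (Fin (n + 1))) : ℝ := (|x 0 + tl x| - |x 0 - tl x|) / 2

lemma tl_nonneg (x : EuclideanSpace ℝ (Fin (n + 1))) : 0 ≤ tl x := norm_nonneg _

lemma socAbs_zero (x : EuclideanSpace ℝ (Fin (n + 1))) : socAbs x 0 = av x := by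
  by_cases h : socTail x = 0
  · have h0 : tl x = 0 := by simp [tl, h]
    simp only [socAbs, h, if_pos, av, h0]
    simp
  · simp only [socAbs, h, if_neg, if_pos, av, tl]
    simp

lemma socAbs_succ (x : EuclideanSpace ℝ (Fin (n + 1))) (j : Fin n) :
    socAbs x j.succ = sv x * (x j.succ / tl x) := by
  by_cases h : socTail x = 0
  · have hx : x j.succ = 0 := by
      have := congrArg (fun v => v j) h
      simpa [socTail] using this
    simp [socAbs, h, Fin.succ_ne_zero, hx]
  · simp [socAbs, h, Fin.succ_ne_zero, sv, tl]

lemma socTail_socAbs (x : EuclideanSpace ℝ (Fin (n + 1))) :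
    socTail (socAbs x) = (sv x / tl x) • socTail x := by
  ext j
  simp only [socTail, socAbs_succ, PiLp.smul_apply, smul_eq_mul]
  ring

lemma inner_pi (x y : EuclideanSpace ℝ (Fin (n + 1))) :
    ⟪x, y⟫ = x 0 * y 0 + ⟪socTail x, socTail y⟫ := by
  rw [PiLp.inner_apply, PiLp.inner_apply, Fin.sum_univ_succ]
  simp [RCLike.inner_apply, socTail]
  ring

lemma inner_socAbs (x y : EuclideanSpace ℝ (Fin (n + 1))) :
    ⟪socAbs x, socAbs y⟫ =
      av x * av y + (sv x / tl x) * (sv y / tl y) * ⟪socTail x, socTail y⟫ := by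
  rw [inner_pi, socTail_socAbs, socTail_socAbs, real_inner_smul_left, real_inner_smul_right,
    socAbs_zero, socAbs_zero]
  ring

lemma inner_socAbs_self (x : EuclideanSpace ℝ (Fin (n + 1))) :
    ⟪socAbs x, socAbs x⟫ = ⟪x, x⟫ := by
  rw [inner_socAbs, inner_pi]
  have ht : ⟪socTail x, socTail x⟫ = tl x ^ 2 := by
    rw [real_inner_self_eq_norm_sq]; rfl
  rw [ht]
  by_cases h : tl x = 0
  · rw [h]
    have := abs_mul_abs_self (x 0)
    simp only [av, sv, h, sub_zero, add_zero, sub_self, zero_div, zero_mul, mul_zero]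
    nlinarith [this]
  · have h1 := sq_abs (x 0 - tl x)
    have h2 := sq_abs (x 0 + tl x)
    field_simp [av, sv]
    simp only [av, sv]
    nlinarith [h1, h2]

lemma av_abs_le (x : EuclideanSpace ℝ (Fin (n + 1))) : |x 0| ≤ av x := by
  have h := abs_add_le (x 0 - tl x) (x 0 + tl x)
  have h2 : (x 0 - tl x) + (x 0 + tl x) = 2 * x 0 := by ring
  rw [h2] at h
  have h3 : |2 * x 0| = 2 * |x 0| := by rw [abs_mul]; norm_num
  rw [h3] at h
  unfold av; linarith

lemma abs_sv_le (x : EuclideanSpace ℝ (Fin (n + 1))) : |sv x| ≤ tl x := by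
  have h1 := abs_sub_abs_le_abs_sub (x 0 + tl x) (x 0 - tl x)
  have h2 := abs_sub_abs_le_abs_sub (x 0 - tl x) (x 0 + tl x)
  have e1 : (x 0 + tl x) - (x 0 - tl x) = 2 * tl x := by ring
  have e2 : (x 0 - tl x) - (x 0 + tl x) = -(2 * tl x) := by ring
  rw [e1] at h1; rw [e2, abs_neg] at h2
  have e3 : |2 * tl x| = 2 * tl x := by
    rw [abs_mul, abs_of_nonneg (tl_nonneg x)]; norm_num
  rw [e3] at h1 h2
  rw [abs_le]; constructor <;> (unfold sv; linarith)

lemma key (x y : EuclideanSpace ℝ (Fin (n + 1))) :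
    ⟪x, y⟫ ≤ ⟪socAbs x, socAbs y⟫ := by
  rw [inner_pi, inner_socAbs]
  have hp : ⟪socTail x, socTail y⟫ ≤ tl x * tl y := real_inner_le_norm _ _
  have hmain : x 0 * y 0 + tl x * tl y ≤ av x * av y + sv x * sv y := by
    have e1 := le_abs_self ((x 0 - tl x) * (y 0 - tl y))
    have e2 := le_abs_self ((x 0 + tl x) * (y 0 + tl y))
    rw [abs_mul] at e1 e2
    unfold av sv
    nlinarith [e1, e2]
  by_cases hx : tl x = 0
  · have hx0 : socTail x = 0 := by rwa [← norm_eq_zero]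
    have hp0 : ⟪socTail x, socTail y⟫ = (0:ℝ) := by rw [hx0, inner_zero_left]
    rw [hp0]
    have hax : av x = |x 0| := by simp [av, hx]
    have hay := av_abs_le y
    have := le_abs_self (x 0 * y 0)
    rw [abs_mul] at this
    have hx0n := abs_nonneg (x 0)
    have hy0n := abs_nonneg (y 0)
    rw [hax]
    nlinarith
  · by_cases hy : tl y = 0
    · have hy0 : socTail y = 0 := by rwa [← norm_eq_zero]
      have hp0 : ⟪socTail x, socTail y⟫ = (0:ℝ) := by rw [hy0, inner_zero_right]
      rw [hp0]
      have hay : av y = |y 0| := by simp [av, hy]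
      have hax := av_abs_le x
      have := le_abs_self (x 0 * y 0)
      rw [abs_mul] at this
      have hx0n := abs_nonneg (x 0)
      have hy0n := abs_nonneg (y 0)
      rw [hay]
      nlinarith
    · have htx : 0 < tl x := lt_of_le_of_ne (tl_nonneg x) (Ne.symm hx)
      have hty : 0 < tl y := lt_of_le_of_ne (tl_nonneg y) (Ne.symm hy)
      have hc : sv x * sv y ≤ tl x * tl y := by
        calc sv x * sv y ≤ |sv x * sv y| := le_abs_self _
          _ = |sv x| * |sv y| := abs_mul _ _
          _ ≤ tl x * tl y :=
            mul_le_mul (abs_sv_le x) (abs_sv_le y) (abs_nonneg _) (tl_nonneg x)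
      have hc1 : (sv x / tl x) * (sv y / tl y) ≤ 1 := by
        rw [div_mul_div_comm, div_le_one (by positivity)]
        exact hc
      have hcc : (sv x / tl x) * (sv y / tl y) * (tl x * tl y) = sv x * sv y := by
        field_simp
      nlinarith [hmain, hcc, mul_nonneg (sub_nonneg.2 hc1) (sub_nonneg.2 hp)]

lemma socAbs_lip (x y : EuclideanSpace ℝ (Fin (n + 1))) :
    ‖socAbs x - socAbs y‖ ^ 2 ≤ ‖x - y‖ ^ 2 := by
  rw [← real_inner_self_eq_norm_sq, ← real_inner_self_eq_norm_sq,
    real_inner_sub_sub_self, real_inner_sub_sub_self]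
  have h1 := key x y
  have h2 := inner_socAbs_self x
  have h3 := inner_socAbs_self y
  linarith

end SocAux

/-- If `‖Ay‖ ≥ ‖y‖` for all `y` and `x*` solves the SOCAVE `Ax - |x| - b = 0`, then with
`r x = Ax - |x| - b` we have `⟪A(x - x*), r x⟫ ≥ (1/2) ‖r x‖²` for every `x`. -/
theorem soc_contraction_inequality (n : ℕ) (A : Matrix (Fin (n + 1)) (Fin (n + 1)) ℝ)
    (hA : ∀ y : EuclideanSpace ℝ (Fin (n + 1)), ‖y‖ ≤ ‖Matrix.toEuclideanLin A y‖)
    (b xs : EuclideanSpace ℝ (Fin (n + 1)))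
    (hxs : Matrix.toEuclideanLin A xs - socAbs xs - b = 0) :
    ∀ x : EuclideanSpace ℝ (Fin (n + 1)),
      (1 / 2) * ‖Matrix.toEuclideanLin A x - socAbs x - b‖ ^ 2 ≤
        ⟪Matrix.toEuclideanLin A (x - xs),
          Matrix.toEuclideanLin A x - socAbs x - b⟫ := by
  intro x
  have hb : b = Matrix.toEuclideanLin A xs - socAbs xs := (sub_eq_zero.mp hxs).symm
  have hrw : Matrix.toEuclideanLin A x - socAbs x - (Matrix.toEuclideanLin A xs - socAbs xs)
      = Matrix.toEuclideanLin A (x - xs) - (socAbs x - socAbs xs) := by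
    rw [map_sub]; abel
  rw [hb, hrw]
  set w := Matrix.toEuclideanLin A (x - xs) with hwdef
  set d := socAbs x - socAbs xs with hddef
  have hw : ‖x - xs‖ ≤ ‖w‖ := hA _
  have hd2 : ‖d‖ ^ 2 ≤ ‖x - xs‖ ^ 2 := SocAux.socAbs_lip x xs
  have e1 : ‖w - d‖ ^ 2 = ‖w‖ ^ 2 - 2 * ⟪w, d⟫ + ‖d‖ ^ 2 := by
    rw [← real_inner_self_eq_norm_sq, ← real_inner_self_eq_norm_sq,
      ← real_inner_self_eq_norm_sq]
    exact real_inner_sub_sub_self w d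
  have e2 : ⟪w, w - d⟫ = ‖w‖ ^ 2 - ⟪w, d⟫ := by
    rw [inner_sub_right, real_inner_self_eq_norm_sq]
  rw [e1, e2]
  nlinarith [norm_nonneg (x - xs), norm_nonneg w, hw, hd2]
end
end
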